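/- For every integer k ≥ 0: (i) ⋀^k F = ⋀^k E + I^k, i.e. every element of ⋀^k F is congruent modulo I^k to an element of ⋀^k E; and (ii) ⋀^k E ∩ I^k = ω ∧ ⋀^{k−2}E. Consequently, the inclusion ⋀^k E ↪ ⋀^k F induces a linear isomorphism ⋀^k E / (ω ∧ ⋀^{k−2}E) ≅ ⋀^k F / I^k. -/
import Mathlib


open ExteriorAlgebra

/-- The `j`-th exterior power of the subspace `E ⊆ F`, viewed inside the exterior
algebra of `F` (by convention `{0}` for `j < 0`, and `ℝ·1` for `j = 0`). -/
noncomputable def powE {F : Type*} [AddCommGroup F] [Module ℝ F]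
    (E : Submodule ℝ F) (j : ℤ) : Submodule ℝ (ExteriorAlgebra ℝ F) :=
  if 0 ≤ j then (Submodule.map (ExteriorAlgebra.ι ℝ) E) ^ j.toNat else ⊥

/-- Membership in `I^k = {θ ∧ α + ω ∧ β : α ∈ ⋀^{k-1} E, β ∈ ⋀^{k-2} E}`. -/
def memI {F : Type*} [AddCommGroup F] [Module ℝ F] (E : Submodule ℝ F)
    (θ : F) (ω : ExteriorAlgebra ℝ F) (k : ℤ) (γ : ExteriorAlgebra ℝ F) : Prop :=
  ∃ a ∈ powE E (k - 1), ∃ b ∈ powE E (k - 2), γ = ExteriorAlgebra.ι ℝ θ * a + ω * b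

section aux
variable {F : Type*} [AddCommGroup F] [Module ℝ F]

lemma powE_natCast (E : Submodule ℝ F) (k : ℕ) :
    powE E (k : ℤ) = (Submodule.map (ExteriorAlgebra.ι ℝ) E) ^ k := by
  simp [powE]

lemma powE_neg (E : Submodule ℝ F) {j : ℤ} (h : j < 0) : powE E j = ⊥ := by
  simp [powE, not_le.2 h]

/-- contraction kills the subalgebra generated by `E` when the functional kills `E`. -/
lemma contract_kill (E : Submodule ℝ F) (c : Module.Dual ℝ F) (hc : ∀ e ∈ E, c e = 0)
    {j : ℕ} {x : ExteriorAlgebra ℝ F}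
    (hx : x ∈ (Submodule.map (ExteriorAlgebra.ι ℝ) E) ^ j) :
    CliffordAlgebra.contractLeft (Q := (0 : QuadraticForm ℝ F)) c x = 0 := by
  refine Submodule.pow_induction_on_left'
    (M := Submodule.map (ExteriorAlgebra.ι ℝ) E)
    (C := fun _ a _ =>
      CliffordAlgebra.contractLeft (Q := (0 : QuadraticForm ℝ F)) c a = 0)
    (fun r => by simp)
    (fun a b i ha' hb' ha hb => by simp [ha, hb]) (fun m hm i y hy' hy => ?_) hx
  obtain ⟨e, he, rfl⟩ := hm
  rw [CliffordAlgebra.contractLeft_ι_mul, hy, hc e he, zero_smul, mul_zero, sub_zero]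

lemma contract_theta_mul (c : Module.Dual ℝ F) (θ : F) (hcθ : c θ = 1)
    (a : ExteriorAlgebra ℝ F) (E : Submodule ℝ F) (hc : ∀ e ∈ E, c e = 0)
    {j : ℕ} (ha : a ∈ (Submodule.map (ExteriorAlgebra.ι ℝ) E) ^ j) :
    CliffordAlgebra.contractLeft (Q := (0 : QuadraticForm ℝ F)) c
      (ExteriorAlgebra.ι ℝ θ * a) = a := by
  rw [CliffordAlgebra.contractLeft_ι_mul, contract_kill E c hc ha, mul_zero, sub_zero,
    hcθ, one_smul]

end aux

section aux2
variable {F : Type*} [AddCommGroup F] [Module ℝ F]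

lemma decomp_pow (E : Submodule ℝ F) (θ : F)
    (hdec : ∀ x : F, ∃ e ∈ E, ∃ r : ℝ, x = e + r • θ) (k : ℕ) :
    ∀ γ ∈ (LinearMap.range (ExteriorAlgebra.ι ℝ : F →ₗ[ℝ] ExteriorAlgebra ℝ F)) ^ (k + 1),
      ∃ γ' ∈ (Submodule.map (ExteriorAlgebra.ι ℝ) E) ^ (k + 1),
        ∃ a ∈ (Submodule.map (ExteriorAlgebra.ι ℝ) E) ^ k,
          γ = γ' + ExteriorAlgebra.ι ℝ θ * a := by
  set M := Submodule.map (ExteriorAlgebra.ι ℝ) E with hM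
  induction k with
  | zero =>
    intro γ hγ
    rw [pow_one] at hγ
    obtain ⟨x, rfl⟩ := hγ
    obtain ⟨e, he, r, rfl⟩ := hdec x
    refine ⟨ExteriorAlgebra.ι ℝ e, by rw [pow_one]; exact ⟨e, he, rfl⟩,
      algebraMap ℝ _ r, by rw [pow_zero]; exact Submodule.algebraMap_mem r, ?_⟩
    rw [map_add, map_smul, Algebra.smul_def, Algebra.commutes]
  | succ k ih =>
    intro γ hγ
    rw [pow_succ'] at hγ
    refine Submodule.mul_induction_on hγ (fun m hm y hy => ?_) (fun x y hx hy => ?_)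
    · -- hm
      obtain ⟨x, rfl⟩ := hm
      obtain ⟨e, he, r, rfl⟩ := hdec x
      obtain ⟨γ', hγ', a, ha, rfl⟩ := ih y hy
      have hsw : ExteriorAlgebra.ι ℝ e * ExteriorAlgebra.ι ℝ θ
          = -(ExteriorAlgebra.ι ℝ θ * ExteriorAlgebra.ι ℝ e) :=
        eq_neg_of_add_eq_zero_left (ExteriorAlgebra.ι_add_mul_swap e θ)
      refine ⟨ExteriorAlgebra.ι ℝ e * γ',
        (pow_succ' M (k + 1)) ▸ Submodule.mul_mem_mul ⟨e, he, rfl⟩ hγ',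
        r • γ' - ExteriorAlgebra.ι ℝ e * a,
        sub_mem (Submodule.smul_mem _ _ hγ')
          ((pow_succ' M k) ▸ Submodule.mul_mem_mul ⟨e, he, rfl⟩ ha), ?_⟩
      rw [map_add, map_smul, add_mul, mul_add, mul_add, smul_mul_assoc, smul_mul_assoc,
        ← mul_assoc, ← mul_assoc, hsw, ExteriorAlgebra.ι_sq_zero, zero_mul, smul_zero,
        add_zero, mul_sub, mul_smul_comm, neg_mul]
      simp only [mul_assoc]
      abel
    · obtain ⟨γ₁, h₁, a₁, ha₁, rfl⟩ := hx
      obtain ⟨γ₂, h₂, a₂, ha₂, rfl⟩ := hy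
      refine ⟨γ₁ + γ₂, add_mem h₁ h₂, a₁ + a₂, add_mem ha₁ ha₂, ?_⟩
      rw [mul_add]
      abel

end aux2

/-- Existence of a dual functional vanishing on `E` with value 1 on `θ`. -/
lemma exists_dual {F : Type*} [AddCommGroup F] [Module ℝ F]
    (E : Submodule ℝ F) (θ : F) (hθ : θ ∉ E) :
    ∃ c : Module.Dual ℝ F, c θ = 1 ∧ ∀ e ∈ E, c e = 0 := by
  have hq : (Submodule.Quotient.mk θ : F ⧸ E) ≠ 0 := by
    simpa [Submodule.Quotient.mk_eq_zero] using hθ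
  have : ¬ ∀ f : Module.Dual ℝ (F ⧸ E), f (Submodule.Quotient.mk θ) = 0 := by
    rw [Module.forall_dual_apply_eq_zero_iff]; exact hq
  push_neg at this
  obtain ⟨f, hf⟩ := this
  refine ⟨(f (Submodule.Quotient.mk θ))⁻¹ • (f.comp E.mkQ), ?_, fun e he => ?_⟩
  · simp [inv_mul_cancel₀ hf]
  · simp [(Submodule.Quotient.mk_eq_zero E).mpr he, Submodule.mkQ_apply]

/-- (i) `⋀^k F = ⋀^k E + I^k`, i.e. every element of `⋀^k F` is congruent
modulo `I^k` to an element of `⋀^k E`; and (ii) `⋀^k E ∩ I^k = ω ∧ ⋀^{k-2} E`.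
(Consequently, the inclusion `⋀^k E ↪ ⋀^k F` induces a linear isomorphism
`⋀^k E / (ω ∧ ⋀^{k-2} E) ≅ ⋀^k F / I^k`.) -/
theorem lambdaF_eq_lambdaE_add_I {F : Type*} [AddCommGroup F] [Module ℝ F]
    [FiniteDimensional ℝ F]
    (n : ℕ) (hn : 1 ≤ n) (hdimF : Module.finrank ℝ F = 2 * n + 1)
    (E : Submodule ℝ F) (hdimE : Module.finrank ℝ E = 2 * n)
    (θ : F) (hθ : θ ∉ E)
    (ω : ExteriorAlgebra ℝ F) (hω : ω ∈ powE E 2) (hωn : ω ^ n ≠ 0)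
    (k : ℕ) :
    (∀ γ ∈ ⋀[ℝ]^k F, ∃ γ' ∈ powE E (k : ℤ), memI E θ ω (k : ℤ) (γ - γ')) ∧
    (∀ γ : ExteriorAlgebra ℝ F,
      (γ ∈ powE E (k : ℤ) ∧ memI E θ ω (k : ℤ) γ) ↔
        ∃ b ∈ powE E ((k : ℤ) - 2), γ = ω * b) := by
  set M := Submodule.map (ExteriorAlgebra.ι ℝ) E with hM
  have hθ0 : θ ≠ 0 := fun h => hθ (h ▸ E.zero_mem)
  -- E ⊔ span θ = ⊤
  have hdisj : E ⊓ (ℝ ∙ θ) = ⊥ :=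
    disjoint_iff.mp ((Submodule.disjoint_span_singleton' hθ0).mpr hθ)
  have hsup : E ⊔ (ℝ ∙ θ) = ⊤ := by
    apply Submodule.eq_top_of_finrank_eq
    have := Submodule.finrank_sup_add_finrank_inf_eq E (ℝ ∙ θ)
    rw [hdisj, finrank_bot, add_zero, hdimE, finrank_span_singleton hθ0] at this
    rw [this, hdimF]
  have hdec : ∀ x : F, ∃ e ∈ E, ∃ r : ℝ, x = e + r • θ := by
    intro x
    have hx : x ∈ E ⊔ (ℝ ∙ θ) := hsup ▸ Submodule.mem_top
    obtain ⟨y, hy, z, hz, rfl⟩ := Submodule.mem_sup.mp hx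
    obtain ⟨r, rfl⟩ := Submodule.mem_span_singleton.mp hz
    exact ⟨y, hy, r, rfl⟩
  have hω2 : ω ∈ M ^ 2 := by
    have : powE E 2 = M ^ 2 := by simp [powE, hM]
    rwa [this] at hω
  obtain ⟨c, hcθ, hcE⟩ := exists_dual E θ hθ
  constructor
  · -- Part (i)
    intro γ hγ
    cases k with
    | zero =>
      refine ⟨γ, ?_, 0, ?_, 0, ?_, ?_⟩
      · rw [show ((0 : ℕ) : ℤ) = (0 : ℤ) by norm_num, ← Nat.cast_zero, powE_natCast]
        simpa using hγ
      · exact Submodule.zero_mem _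
      · exact Submodule.zero_mem _
      · simp
    | succ k =>
      obtain ⟨γ', hγ', a, ha, hid⟩ := decomp_pow E θ hdec k γ hγ
      refine ⟨γ', by rw [powE_natCast]; exact hγ', a, ?_, 0, Submodule.zero_mem _, ?_⟩
      · have h1 : ((k + 1 : ℕ) : ℤ) - 1 = ((k : ℕ) : ℤ) := by push_cast; ring
        rw [h1, powE_natCast]; exact ha
      · rw [mul_zero, add_zero, hid, add_sub_cancel_left]
  · -- Part (ii)
    intro γ
    constructor
    · rintro ⟨hγE, a, ha, b, hb, rfl⟩
      -- show `ι θ * a = 0` by contraction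
      have hωb : ∃ j : ℕ, ω * b ∈ M ^ j := by
        rcases lt_or_ge ((k : ℤ) - 2) 0 with h | h
        · rw [powE_neg E h, Submodule.mem_bot] at hb
          exact ⟨0, by rw [hb, mul_zero]; exact Submodule.zero_mem _⟩
        · refine ⟨k, ?_⟩
          have hk2 : 2 ≤ k := by omega
          have hbk : b ∈ M ^ (k - 2) := by
            have : ((k : ℤ) - 2) = ((k - 2 : ℕ) : ℤ) := by push_cast [hk2]; ring
            rwa [this, powE_natCast] at hb
          have := Submodule.mul_mem_mul hω2 hbk
          rwa [← pow_add, show 2 + (k - 2) = k by omega] at this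
      have ha' : a = 0 := by
        rcases lt_or_ge ((k : ℤ) - 1) 0 with h | h
        · rw [powE_neg E h, Submodule.mem_bot] at ha; exact ha
        · have hk1 : 1 ≤ k := by omega
          have hak : a ∈ M ^ (k - 1) := by
            have : ((k : ℤ) - 1) = ((k - 1 : ℕ) : ℤ) := by push_cast [hk1]; ring
            rwa [this, powE_natCast] at ha
          have hγE' : ExteriorAlgebra.ι ℝ θ * a + ω * b ∈ M ^ k := by
            rwa [powE_natCast] at hγE
          obtain ⟨j, hj⟩ := hωb
          have h0 : CliffordAlgebra.contractLeft (Q := (0 : QuadraticForm ℝ F)) c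
              (ExteriorAlgebra.ι ℝ θ * a + ω * b) = 0 := contract_kill E c hcE hγE'
          rw [map_add, contract_theta_mul c θ hcθ a E hcE hak,
            contract_kill E c hcE hj, add_zero] at h0
          exact h0
      exact ⟨b, hb, by rw [ha', mul_zero, zero_add]⟩
    · rintro ⟨b, hb, rfl⟩
      refine ⟨?_, 0, Submodule.zero_mem _, b, hb, by rw [mul_zero, zero_add]⟩
      rcases lt_or_ge ((k : ℤ) - 2) 0 with h | h
      · rw [powE_neg E h, Submodule.mem_bot] at hb
        rw [hb, mul_zero]; exact Submodule.zero_mem _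
      · have hk2 : 2 ≤ k := by omega
        have hbk : b ∈ M ^ (k - 2) := by
          have : ((k : ℤ) - 2) = ((k - 2 : ℕ) : ℤ) := by push_cast [hk2]; ring
          rwa [this, powE_natCast] at hb
        rw [powE_natCast]
        have := Submodule.mul_mem_mul hω2 hbk
        rwa [← pow_add, show 2 + (k - 2) = k by omega] at this
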